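/- arXiv:math/0405248 — 3 statements merged into one kernel-verified Lean document; each statement's English description precedes it below -/
import Mathlib

section
/- In the quotient group B_3/(σ_i^4) of the 3-strand braid group by the normal closure of σ_1^4, the elements (σ_1 σ_2)^6 and (σ_1 σ_2^{−1})^3 are equal. -/
/-- The braid relation of `B₃`: `σ₁σ₂σ₁ = σ₂σ₁σ₂`, as an element of the free group
on two generators. -/
def braidRel3 : FreeGroup (Fin 2) :=
  FreeGroup.of 0 * FreeGroup.of 1 * FreeGroup.of 0 *
    (FreeGroup.of 1 * FreeGroup.of 0 * FreeGroup.of 1)⁻¹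

/-- Relations presenting the quotient `B₃/(σᵢ⁴)`: the braid relation together with
`σ₁⁴` (whose normal closure contains all `σᵢ⁴`). -/
def rels3_4 : Set (FreeGroup (Fin 2)) := {braidRel3, (FreeGroup.of 0) ^ 4}

/-- In any group, if `a`, `b` satisfy the braid relation and `a⁴ = 1` and `b⁴ = 1` follows,
then `(ab)⁶ = (ab⁻¹)³`. -/
private lemma key_braid {G : Type*} [Group G] (a b : G)
    (hbr : a * b * a * (b * a * b)⁻¹ = 1) (ha : a ^ 4 = 1) :
    (a * b) ^ 6 = (a * b⁻¹) ^ 3 := by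
  have hbr' : a * b * a = b * a * b := by
    rw [mul_inv_eq_one] at hbr; exact hbr
  have h1 : (a * b) * a * (a * b)⁻¹ = b := by
    calc (a * b) * a * (a * b)⁻¹ = (a * b * a) * (a * b)⁻¹ := by group
      _ = (b * a * b) * (a * b)⁻¹ := by rw [hbr']
      _ = b := by group
  have hb : b ^ 4 = 1 := by
    calc b ^ 4 = ((a * b) * a * (a * b)⁻¹) ^ 4 := by rw [h1]
      _ = (a * b) * a ^ 4 * (a * b)⁻¹ := by simp [pow_succ, mul_assoc]
      _ = 1 := by rw [ha]; group
  have main : (a * b) ^ 6 * ((a * b⁻¹) ^ 3)⁻¹ =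
      (a*b*a*b*a*b*a*b*a) * (a*b*a*(b*a*b)⁻¹)⁻¹ * (a*b*a*b*a*b*a*b*a)⁻¹ *
      ((a*b*a*b*a*b*a*b*a*a) * (a*b*a*(b*a*b)⁻¹)⁻¹ * (a*b*a*b*a*b*a*b*a*a)⁻¹) *
      ((a*b*a*b*a*b*a*b) * (a^4) * (a*b*a*b*a*b*a*b)⁻¹) *
      ((a*b*a*b*a) * (a*b*a*(b*a*b)⁻¹)⁻¹ * (a*b*a*b*a)⁻¹) *
      ((a*b*a*b*a*a) * (b^4) * (a*b*a*b*a*a)⁻¹) *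
      ((a*b*a*b*a*a*b⁻¹*a⁻¹*b⁻¹) * (a*b*a*(b*a*b)⁻¹) * (a*b*a*b*a*a*b⁻¹*a⁻¹*b⁻¹)⁻¹) *
      ((a*b) * (a*b*a*(b*a*b)⁻¹) * (a*b)⁻¹) *
      (a * (b^4) * a⁻¹) := by
    simp only [pow_succ, pow_zero, one_mul, mul_inv_rev, inv_inv, mul_assoc]
    group
  rw [hbr, ha, hb] at main
  simp only [inv_one, mul_one, one_mul, mul_inv_cancel] at main
  exact mul_inv_eq_one.mp main

/-- In `B₃/(σᵢ⁴)`, the elements `(σ₁σ₂)⁶` and `(σ₁σ₂⁻¹)³` are equal. -/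
theorem delta_four_eq_borromean :
    ((PresentedGroup.of (rels := rels3_4) 0 * PresentedGroup.of 1) ^ 6 :
        PresentedGroup rels3_4) =
      (PresentedGroup.of 0 * (PresentedGroup.of 1)⁻¹) ^ 3 := by
  have hbr : (PresentedGroup.of (rels := rels3_4) 0 * PresentedGroup.of 1 * PresentedGroup.of 0 *
      (PresentedGroup.of 1 * PresentedGroup.of 0 * PresentedGroup.of 1)⁻¹ :
      PresentedGroup rels3_4) = 1 := by
    have h : PresentedGroup.mk rels3_4 braidRel3 = 1 :=
      (QuotientGroup.eq_one_iff _).mpr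
        (Subgroup.subset_normalClosure (Or.inl rfl))
    simpa [braidRel3, PresentedGroup.of] using h
  have ha : ((PresentedGroup.of (rels := rels3_4) 0 : PresentedGroup rels3_4)) ^ 4 = 1 := by
    have h : PresentedGroup.mk rels3_4 ((FreeGroup.of 0) ^ 4) = 1 :=
      (QuotientGroup.eq_one_iff _).mpr
        (Subgroup.subset_normalClosure (Or.inr rfl))
    simpa [PresentedGroup.of] using h
  exact key_braid _ _ hbr ha
end

section
/- In the quotient group B_3/(σ_i^4), the central element Δ_3^4 = (σ_1σ_2)^6 equals its own inverse, i.e., (σ_1σ_2)^{12} = 1 in B_3/(σ_i^4). -/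
section Braid

variable {G : Type*} [Group G] {a b : G}

theorem semiconjBy_braid_left (h : a * b * a = b * a * b) : SemiconjBy (a * b * a) a b :=
  calc a * b * a * a = b * a * b * a := by rw [h]
    _ = b * (a * b * a) := by group

theorem semiconjBy_braid_right (h : a * b * a = b * a * b) : SemiconjBy (a * b * a) b a :=
  calc a * b * a * b = a * (b * a * b) := by group
    _ = a * (a * b * a) := by rw [h]

theorem pow_eq_one_of_braid (h : a * b * a = b * a * b) {n : ℕ} (ha : a ^ n = 1) :
    b ^ n = 1 := by
  simpa [ha] using ((semiconjBy_braid_left h).pow_right n).eq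

theorem mul_pow_three_eq_braid_sq (h : a * b * a = b * a * b) :
    (a * b) ^ 3 = (a * b * a) ^ 2 :=
  calc (a * b) ^ 3 = a * b * a * (b * a * b) := by simp only [pow_succ, pow_zero, one_mul, mul_assoc]
    _ = (a * b * a) ^ 2 := by rw [← h, sq]

theorem commute_mul_pow_three_left (h : a * b * a = b * a * b) : Commute ((a * b) ^ 3) a := by
  rw [mul_pow_three_eq_braid_sq h, sq]
  exact (semiconjBy_braid_right h).mul_left (semiconjBy_braid_left h)

theorem commute_mul_pow_three_right (h : a * b * a = b * a * b) : Commute ((a * b) ^ 3) b := by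
  rw [mul_pow_three_eq_braid_sq h, sq]
  exact (semiconjBy_braid_left h).mul_left (semiconjBy_braid_right h)

theorem commute_mul_pow_three_braid (h : a * b * a = b * a * b) :
    Commute ((a * b) ^ 3) (a * b * a) :=
  have ha := commute_mul_pow_three_left h
  (ha.mul_right (commute_mul_pow_three_right h)).mul_right ha

/-- The conjugator is a product of three elementary conjugations:
`(ab)² = a²ba ~ a³b ~ ba³ ~ ab³`, the last one by `Δ`. -/
theorem semiconjBy_mul_sq_mul_pow_three (h : a * b * a = b * a * b) :
    SemiconjBy (a * b * a * b * a) ((a * b) ^ 2) (a * b ^ 3) := by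
  have h₁ : SemiconjBy a ((a * b) ^ 2) (a ^ 3 * b) :=
    calc a * (a * b) ^ 2 = a * a * (b * a * b) := by simp only [sq, mul_assoc]
      _ = a ^ 3 * b * a := by rw [← h]; simp only [pow_succ, pow_zero, one_mul, mul_assoc]
  have h₂ : SemiconjBy b (a ^ 3 * b) (b * a ^ 3) := by
    simp only [SemiconjBy, mul_assoc]
  have h₃ : SemiconjBy (a * b * a) (b * a ^ 3) (a * b ^ 3) :=
    (semiconjBy_braid_right h).mul_right ((semiconjBy_braid_left h).pow_right 3)
  exact (h₃.mul_left h₂).mul_left h₁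

theorem mul_pow_three_pow_three (h : a * b * a = b * a * b) :
    (a * b ^ 3) ^ 3 = (a * b) ^ 6 := by
  have hconj := (semiconjBy_mul_sq_mul_pow_three h).pow_right 3
  have hcomm : Commute ((a * b) ^ 6) (a * b * a * b * a) := by
    simpa only [← pow_mul] using (((commute_mul_pow_three_braid h).mul_right
      (commute_mul_pow_three_right h)).mul_right (commute_mul_pow_three_left h)).pow_left 2
  rw [← pow_mul] at hconj
  exact (mul_right_cancel (hcomm.eq.trans hconj.eq)).symm

theorem semiconjBy_braid_mul_inv (h : a * b * a = b * a * b) :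
    SemiconjBy (a * b * a) (a * b⁻¹) (a * b⁻¹)⁻¹ := by
  rw [mul_inv_rev, inv_inv]
  exact (semiconjBy_braid_left h).mul_right (semiconjBy_braid_right h).inv_right

theorem mul_pow_twelve_eq_one_of_braid (h : a * b * a = b * a * b) (ha : a ^ 4 = 1) :
    (a * b) ^ 12 = 1 := by
  have hb : b⁻¹ = b ^ 3 := inv_eq_of_mul_eq_one_right <| by
    rw [← pow_succ', pow_eq_one_of_braid h ha]
  have hz : (a * b) ^ 6 = (a * b⁻¹) ^ 3 := by rw [hb, mul_pow_three_pow_three h]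
  have hinv : SemiconjBy (a * b * a) ((a * b) ^ 6) ((a * b) ^ 6)⁻¹ := by
    rw [hz, ← inv_pow]
    exact (semiconjBy_braid_mul_inv h).pow_right 3
  have hcomm : Commute (a * b * a) ((a * b) ^ 6) := by
    simpa only [← pow_mul] using ((commute_mul_pow_three_braid h).pow_left 2).symm
  have hself : (a * b) ^ 6 = ((a * b) ^ 6)⁻¹ := mul_right_cancel (hcomm.eq.symm.trans hinv.eq)
  calc (a * b) ^ 12 = (a * b) ^ 6 * ((a * b) ^ 6)⁻¹ := by rw [← hself, ← pow_add]
    _ = 1 := mul_inv_cancel _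

end Braid

theorem braid_rels3_4 :
    (PresentedGroup.of 0 * PresentedGroup.of 1 * PresentedGroup.of 0 : PresentedGroup rels3_4) =
      PresentedGroup.of 1 * PresentedGroup.of 0 * PresentedGroup.of 1 :=
  PresentedGroup.mk_eq_mk_of_mul_inv_mem (Set.mem_insert _ _)

theorem of_zero_pow_four_rels3_4 : (PresentedGroup.of 0 : PresentedGroup rels3_4) ^ 4 = 1 :=
  PresentedGroup.one_of_mem (Set.mem_insert_of_mem _ rfl)

/-- In `B₃/(σᵢ⁴)`, the central element `Δ₃⁴ = (σ₁σ₂)⁶` is its own inverse: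
`(σ₁σ₂)¹² = 1`. -/
theorem delta_four_involutive :
    ((PresentedGroup.of (rels := rels3_4) 0 * PresentedGroup.of 1) ^ 12 :
        PresentedGroup rels3_4) = 1 :=
  mul_pow_twelve_eq_one_of_braid braid_rels3_4 of_zero_pow_four_rels3_4
end

section
/- The Coxeter quotient B_3/(σ_i^3) of the 3-strand braid group by the normal closure of σ_1^3 is a finite group of order 24. -/
/-- Relations presenting the Coxeter quotient `B₃/(σᵢ³)`: the braid relation together
with `σ₁³` (whose normal closure contains all `σᵢ³`, since `σ₂` is conjugate to `σ₁`). -/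
def rels3_3 : Set (FreeGroup (Fin 2)) := {braidRel3, (FreeGroup.of 0) ^ 3}

namespace CoxeterQuotientB3

section Rules

variable {G : Type*} [Group G] {a b : G}

theorem pow_three_eq_one_of_braid (hab : a * b * a = b * a * b) (ha : a ^ 3 = 1) : b ^ 3 = 1 := by
  have hconj : (a * b) * a * (a * b)⁻¹ = b := by
    rw [hab]; group
  rw [← hconj, conj_pow, ha, mul_one, mul_inv_cancel]

theorem mul_self_eq_inv_of_pow_three (ha : a ^ 3 = 1) : a * a = a⁻¹ := by
  rwa [← mul_eq_one_iff_eq_inv, ← pow_three']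

theorem mul_mul_mul_of_pow_three (ha : a ^ 3 = 1) (x : G) : a * (a * (a * x)) = x := by
  rw [← mul_assoc, mul_self_eq_inv_of_pow_three ha, inv_mul_cancel_left]

theorem bab_eq_aba (hab : a * b * a = b * a * b) (x : G) :
    b * (a * (b * x)) = a * (b * (a * x)) := by
  simp only [← mul_assoc, hab]

theorem baaba_eq_abaab (hab : a * b * a = b * a * b) (x : G) :
    b * (a * (a * (b * (a * x)))) = a * (b * (a * (a * (b * x)))) := by
  calc _ = b * a * (a * b * a) * x := by group
    _ = b * a * b * a * b * x := by rw [hab]; group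
    _ = _ := by rw [← hab]; group

theorem baabb_eq_aabba (hab : a * b * a = b * a * b) (ha : a ^ 3 = 1) (x : G) :
    b * (a * (a * (b * (b * x)))) = a * (a * (b * (b * (a * x)))) := by
  have ha' := mul_self_eq_inv_of_pow_three ha
  have hb' := mul_self_eq_inv_of_pow_three (pow_three_eq_one_of_braid hab ha)
  calc _ = b * (a * a) * (b * b) * x := by group
    _ = a⁻¹ * b⁻¹ * (b * a * b) * a⁻¹ * b⁻¹ * x := by rw [ha', hb']; group
    _ = (a * a) * (b * b) * a * x := by rw [← hab, ha', hb']; group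
    _ = _ := by group

theorem bbaab_eq_abbaa (hab : a * b * a = b * a * b) (ha : a ^ 3 = 1) (x : G) :
    b * (b * (a * (a * (b * x)))) = a * (b * (b * (a * (a * x)))) := by
  have ha' := mul_self_eq_inv_of_pow_three ha
  have hb' := mul_self_eq_inv_of_pow_three (pow_three_eq_one_of_braid hab ha)
  calc _ = (b * b) * (a * a) * b * x := by group
    _ = b⁻¹ * a⁻¹ * (b * a * b) * b⁻¹ * a⁻¹ * x := by rw [ha', hb']; group
    _ = a * (b * b) * (a * a) * x := by rw [← hab, ha', hb']; group
    _ = _ := by group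

end Rules

section Words

variable {ι G H : Type*} [Group G] [Group H]

def word (g : ι → G) (w : List ι) : G := (w.map g).prod

@[simp] theorem word_nil (g : ι → G) : word g [] = 1 := rfl

@[simp] theorem word_cons (g : ι → G) (i : ι) (w : List ι) : word g (i :: w) = g i * word g w :=
  List.prod_cons

theorem map_word (f : G →* H) (g : ι → G) (w : List ι) : f (word g w) = word (f ∘ g) w := by
  rw [word, map_list_prod, List.map_map, word]

end Words

def normalWords : List (List (Fin 2)) :=
  [[], [0], [1], [0,0], [0,1], [1,0], [1,1], [0,0,1], [0,1,0], [0,1,1], [1,0,0], [1,1,0],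
    [0,0,1,0], [0,0,1,1], [0,1,0,0], [0,1,1,0], [1,0,0,1], [1,1,0,0], [0,0,1,0,0], [0,0,1,1,0],
    [0,1,0,0,1], [0,1,1,0,0], [0,0,1,0,0,1], [0,0,1,1,0,0]]

section NormalForm

variable {G : Type*} [Group G] {g : Fin 2 → G}

theorem exists_mem_normalWords_word_eq_mul (hbraid : g 0 * g 1 * g 0 = g 1 * g 0 * g 1)
    (hcube : g 0 ^ 3 = 1) (i : Fin 2) :
    ∀ w ∈ normalWords, ∃ v ∈ normalWords, word g v = g i * word g w := by
  have hcube' := pow_three_eq_one_of_braid hbraid hcube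
  fin_cases i <;>
  simp only [normalWords, List.forall_mem_cons, List.exists_mem_cons_iff, word_cons, word_nil,
    mul_mul_mul_of_pow_three hcube, mul_mul_mul_of_pow_three hcube', bab_eq_aba hbraid,
    baaba_eq_abaab hbraid, baabb_eq_aabba hbraid hcube, bbaab_eq_abbaa hbraid hcube,
    Fin.zero_eta, Fin.mk_one, true_or, or_true, and_true, List.not_mem_nil, IsEmpty.forall_iff,
    implies_true]

theorem exists_mem_normalWords_word_eq (hgen : Subgroup.closure (Set.range g) = ⊤)
    (hbraid : g 0 * g 1 * g 0 = g 1 * g 0 * g 1) (hcube : g 0 ^ 3 = 1) (x : G) :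
    ∃ w ∈ normalWords, word g w = x := by
  have hfin : ∀ y ∈ Set.range g, IsOfFinOrder y := by
    rintro _ ⟨i, rfl⟩
    refine isOfFinOrder_iff_pow_eq_one.2 ⟨3, three_pos, ?_⟩
    fin_cases i
    · exact hcube
    · exact pow_three_eq_one_of_braid hbraid hcube
  have hmon : Submonoid.closure (Set.range g) = ⊤ := by
    rw [← Subgroup.closure_toSubmonoid_of_isOfFinOrder hfin, hgen, Subgroup.top_toSubmonoid]
  induction x using Submonoid.induction_of_closure_eq_top_left hmon with
  | one => exact ⟨[], by simp [normalWords], rfl⟩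
  | mul_left _ hy x ih =>
    obtain ⟨i, rfl⟩ := hy
    obtain ⟨w, hw, rfl⟩ := ih
    exact exists_mem_normalWords_word_eq_mul hbraid hcube i w hw

end NormalForm

def slGen : Fin 2 → Matrix.SpecialLinearGroup (Fin 2) (ZMod 3) :=
  ![⟨!![1, 1; 0, 1], by decide⟩, ⟨!![1, 0; -1, 1], by decide⟩]

theorem slGen_rels : ∀ r ∈ rels3_3, FreeGroup.lift slGen r = 1 := by
  simp only [rels3_3, Set.mem_insert_iff, Set.mem_singleton_iff, forall_eq_or_imp, forall_eq,
    braidRel3, map_mul, map_inv, map_pow, FreeGroup.lift_apply_of, mul_inv_eq_one]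
  decide

theorem nodup_map_word_slGen : (normalWords.map (word slGen)).Nodup := by
  decide

abbrev σ : Fin 2 → PresentedGroup rels3_3 := PresentedGroup.of

theorem σ_braid : σ 0 * σ 1 * σ 0 = σ 1 * σ 0 * σ 1 := by
  have h := PresentedGroup.one_of_mem (rels := rels3_3) (Set.mem_insert _ _)
  rwa [braidRel3, map_mul, map_mul, map_mul, map_inv, mul_inv_eq_one] at h

theorem σ_cube : σ 0 ^ 3 = 1 := by
  have h := PresentedGroup.one_of_mem (rels := rels3_3) (Set.mem_insert_of_mem _ rfl)
  rwa [map_pow] at h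

theorem nodup_map_word_σ : (normalWords.map (word σ)).Nodup := by
  refine List.Nodup.of_map (PresentedGroup.toGroup slGen_rels) ?_
  simpa only [List.map_map, Function.comp_def, map_word, PresentedGroup.toGroup.of]
    using nodup_map_word_slGen

end CoxeterQuotientB3

open CoxeterQuotientB3 in
/-- The Coxeter quotient `B₃/(σᵢ³)` is a finite group of order 24. -/
theorem card_coxeter_quotient_B3_3 : Nat.card (PresentedGroup rels3_3) = 24 := by
  classical
  have hmem (x) : x ∈ (normalWords.map (word σ)).toFinset := by
    obtain ⟨w, hw, rfl⟩ :=
      exists_mem_normalWords_word_eq (PresentedGroup.closure_range_of _) σ_braid σ_cube x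
    exact List.mem_toFinset.2 (List.mem_map_of_mem hw)
  rw [← Nat.card_congr (Equiv.subtypeUnivEquiv hmem), Nat.card_eq_fintype_card, Fintype.card_coe,
    List.toFinset_card_of_nodup nodup_map_word_σ]
  rfl
end
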